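/- Let f(u,v,w) = u(λ₁ − μ₁u − a₁v − a₂w), g(u,v,w) = v(λ₂ − μ₂v + b₁u − a₃w), h(u,v,w) = w(λ₃ − μ₃w + b₂u + b₃v) with all parameters positive, and let η₁, η₂ ∈ (0,1) satisfy b₁η₁ ≤ a₁, b₂η₂ ≤ a₂, b₃η₂ ≤ a₃η₁. Set λ = max{λ₁,λ₂,λ₃} and μ = min{μ₁,μ₂,μ₃}. Then for all u, v, w ≥ 0: f + η₁g + η₂h ≤ λ(u + η₁v + η₂w) − (μ/3)(u + η₁v + η₂w)². -/
import Mathlib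


lemma jensen3 (x y z : ℝ) : (x + y + z) ^ 2 ≤ 3 * (x ^ 2 + y ^ 2 + z ^ 2) := by
  nlinarith [sq_nonneg (x - y), sq_nonneg (x - z), sq_nonneg (y - z)]

/-- Pointwise kernel of Lemma 2.2: with the weights `η₁, η₂` chosen as in the paper,
`f + η₁g + η₂h ≤ λ(u + η₁v + η₂w) − (μ/3)(u + η₁v + η₂w)²` for all `u, v, w ≥ 0`. -/
theorem stmt_15 (lam₁ lam₂ lam₃ mu₁ mu₂ mu₃ a₁ a₂ a₃ b₁ b₂ b₃ η₁ η₂ : ℝ)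
    (hlam₁ : 0 < lam₁) (hlam₂ : 0 < lam₂) (hlam₃ : 0 < lam₃)
    (hmu₁ : 0 < mu₁) (hmu₂ : 0 < mu₂) (hmu₃ : 0 < mu₃)
    (ha₁ : 0 < a₁) (ha₂ : 0 < a₂) (ha₃ : 0 < a₃)
    (hb₁ : 0 < b₁) (hb₂ : 0 < b₂) (hb₃ : 0 < b₃)
    (hη₁ : η₁ ∈ Set.Ioo (0:ℝ) 1) (hη₂ : η₂ ∈ Set.Ioo (0:ℝ) 1)
    (h1 : b₁ * η₁ ≤ a₁) (h2 : b₂ * η₂ ≤ a₂) (h3 : b₃ * η₂ ≤ a₃ * η₁) :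
    ∀ u v w : ℝ, 0 ≤ u → 0 ≤ v → 0 ≤ w →
      u * (lam₁ - mu₁ * u - a₁ * v - a₂ * w)
        + η₁ * (v * (lam₂ - mu₂ * v + b₁ * u - a₃ * w))
        + η₂ * (w * (lam₃ - mu₃ * w + b₂ * u + b₃ * v)) ≤
      max lam₁ (max lam₂ lam₃) * (u + η₁ * v + η₂ * w)
        - (min mu₁ (min mu₂ mu₃) / 3) * (u + η₁ * v + η₂ * w) ^ 2 := by
  obtain ⟨he1, he1'⟩ := hη₁
  obtain ⟨he2, he2'⟩ := hη₂
  intro u v w hu hv hw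
  set lam := max lam₁ (max lam₂ lam₃) with hlam
  set mu := min mu₁ (min mu₂ mu₃) with hmu
  have hl1 : lam₁ ≤ lam := le_max_left _ _
  have hl2 : lam₂ ≤ lam := le_trans (le_max_left _ _) (le_max_right _ _)
  have hl3 : lam₃ ≤ lam := le_trans (le_max_right _ _) (le_max_right _ _)
  have hm1 : mu ≤ mu₁ := min_le_left _ _
  have hm2 : mu ≤ mu₂ := le_trans (min_le_right _ _) (min_le_left _ _)
  have hm3 : mu ≤ mu₃ := le_trans (min_le_right _ _) (min_le_right _ _)
  have hmup : 0 < mu := lt_min hmu₁ (lt_min hmu₂ hmu₃)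
  -- linear part
  have hlin : lam₁ * u + η₁ * (lam₂ * v) + η₂ * (lam₃ * w) ≤ lam * (u + η₁ * v + η₂ * w) := by
    nlinarith [mul_nonneg he1.le hv, mul_nonneg he2.le hw]
  -- cross part
  have hc1 : u * v * (η₁ * b₁ - a₁) ≤ 0 :=
    mul_nonpos_of_nonneg_of_nonpos (mul_nonneg hu hv) (by nlinarith)
  have hc2 : u * w * (η₂ * b₂ - a₂) ≤ 0 :=
    mul_nonpos_of_nonneg_of_nonpos (mul_nonneg hu hw) (by nlinarith)
  have hc3 : v * w * (η₂ * b₃ - η₁ * a₃) ≤ 0 :=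
    mul_nonpos_of_nonneg_of_nonpos (mul_nonneg hv hw) (by nlinarith)
  -- quadratic part
  have hquad : mu / 3 * (u + η₁ * v + η₂ * w) ^ 2 ≤ mu₁ * u ^ 2 + η₁ * (mu₂ * v ^ 2) + η₂ * (mu₃ * w ^ 2) := by
    have j := mul_le_mul_of_nonneg_left (jensen3 u (η₁ * v) (η₂ * w)) hmup.le
    have k1 : mu * η₁ ≤ mu₂ := (mul_le_of_le_one_right hmup.le he1'.le).trans hm2
    have k2 : mu * η₂ ≤ mu₃ := (mul_le_of_le_one_right hmup.le he2'.le).trans hm3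
    have h1' : mu * (η₁ * v) ^ 2 ≤ mu₂ * (η₁ * v ^ 2) := by
      calc mu * (η₁ * v) ^ 2 = mu * η₁ * (η₁ * v ^ 2) := by ring
        _ ≤ mu₂ * (η₁ * v ^ 2) :=
          mul_le_mul_of_nonneg_right k1 (mul_nonneg he1.le (sq_nonneg v))
    have h2' : mu * (η₂ * w) ^ 2 ≤ mu₃ * (η₂ * w ^ 2) := by
      calc mu * (η₂ * w) ^ 2 = mu * η₂ * (η₂ * w ^ 2) := by ring
        _ ≤ mu₃ * (η₂ * w ^ 2) :=
          mul_le_mul_of_nonneg_right k2 (mul_nonneg he2.le (sq_nonneg w))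
    have h0' : mu * u ^ 2 ≤ mu₁ * u ^ 2 := mul_le_mul_of_nonneg_right hm1 (sq_nonneg u)
    linarith [j, h0', h1', h2']
  linarith [hlin, hc1, hc2, hc3, hquad]
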